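/- Let μ⁺ and μ⁻ be finite Borel measures on ℝ, each with compact support, satisfying μ⁺(ℝ) = μ⁻(ℝ) (i.e. μ = μ⁺ − μ⁻ is a finite signed measure with compact support and total mass zero). Then, with both sides regarded as well-defined elements of (−∞, +∞], ∬ log|x−y|^{−1} dμ⁺(x)dμ⁺(y) + ∬ log|x−y|^{−1} dμ⁻(x)dμ⁻(y) ≥ 2∬ log|x−y|^{−1} dμ⁺(x)dμ⁻(y), and likewise ∬ log|e^x−e^y|^{−1} dμ⁺(x)dμ⁺(y) + ∬ log|e^x−e^y|^{−1} dμ⁻(x)dμ⁻(y) ≥ 2∬ log|e^x−e^y|^{−1} dμ⁺(x)dμ⁻(y). Equivalently, the double integrals ∬ log|x−y|^{−1} dμ(x)dμ(y) and ∬ log|e^x−e^y|^{−1} dμ(x)dμ(y) are nonnegative. -/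

import Mathlib

/-!
For `|x - y| ≤ M`, Frullani's integral gives
`log M - log |x - y| = ∫₀^∞ (exp (-(x - y)² t) - exp (-M² t)) dt / 2t`.
For each `t` the Gaussian kernel `exp (-(x - y)² t)` is positive definite, being (up to a
constant) the self-convolution of the Gaussian `exp (-2 t s²)`, so
`2 ∬ exp (-(x - y)² t) dμ⁺ dμ⁻ ≤ ∬ … dμ⁺ dμ⁺ + ∬ … dμ⁻ dμ⁻`. The terms coming from
`exp (-M² t)` and from `log M` are the same on both sides because `μ⁺` and `μ⁻` have equal mass,
so integrating over `t` yields the inequality for `log |x - y|⁻¹`. The kernel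
`log |eˣ - eʸ|⁻¹` is the pullback of `log |x - y|⁻¹` under `exp`, and pushing `μ^±` forward by
`exp` preserves compact support and mass.
-/

open MeasureTheory
open scoped ENNReal

/-- Positive part of the logarithmic kernel `log|x−y|⁻¹`, valued in `ℝ≥0∞` (it is `⊤` on the
diagonal). -/
noncomputable def logKerPos (x y : ℝ) : ℝ≥0∞ :=
  if x = y then ⊤ else ENNReal.ofReal (-Real.log |x - y|)

/-- Negative part of the logarithmic kernel `log|x−y|⁻¹`. -/
noncomputable def logKerNeg (x y : ℝ) : ℝ≥0∞ :=
  if x = y then 0 else ENNReal.ofReal (Real.log |x - y|)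

/-- Positive part of the kernel `log|eˣ−eʸ|⁻¹`, valued in `ℝ≥0∞`. -/
noncomputable def expKerPos (x y : ℝ) : ℝ≥0∞ :=
  if x = y then ⊤ else ENNReal.ofReal (-Real.log |Real.exp x - Real.exp y|)

/-- Negative part of the kernel `log|eˣ−eʸ|⁻¹`. -/
noncomputable def expKerNeg (x y : ℝ) : ℝ≥0∞ :=
  if x = y then 0 else ENNReal.ofReal (Real.log |Real.exp x - Real.exp y|)

/-- The double integral `∬ K(x,y) dμ(x)dν(y)` of a kernel with positive part `Kpos` and
negative part `Kneg`, as an element of `EReal` (for compactly supported finite measures the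
negative part is finite, so the value lies in `(−∞, +∞]`). -/
noncomputable def dblInt (Kpos Kneg : ℝ → ℝ → ℝ≥0∞) (μ ν : Measure ℝ) : EReal :=
  ((∫⁻ p : ℝ × ℝ, Kpos p.1 p.2 ∂(μ.prod ν)) : EReal)
    - ((∫⁻ p : ℝ × ℝ, Kneg p.1 p.2 ∂(μ.prod ν)) : EReal)

open Real Set

section Frullani

lemma lintegral_exp_neg_mul_Ioi {s : ℝ} (hs : 0 < s) :
    ∫⁻ t in Ioi 0, ENNReal.ofReal (exp (-(s * t))) = ENNReal.ofReal s⁻¹ := by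
  rw [← ofReal_integral_eq_lintegral_ofReal]
  · congr 1
    simpa [neg_mul, div_neg, neg_div] using integral_exp_mul_Ioi (neg_neg_of_pos hs) 0
  · exact (by simpa [neg_mul] using exp_neg_integrableOn_Ioi 0 hs :
      IntegrableOn (fun t ↦ exp (-(s * t))) (Ioi 0))
  · exact ae_of_all _ fun t ↦ (exp_pos _).le

lemma integral_exp_neg_mul {t : ℝ} (ht : 0 < t) (a b : ℝ) :
    ∫ s in a..b, exp (-(s * t)) = (exp (-(a * t)) - exp (-(b * t))) / t := by
  have := intervalIntegral.integral_comp_mul_right (fun u ↦ exp (-u)) ht.ne' (a := a) (b := b)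
  simp only [intervalIntegral.integral_comp_neg, integral_exp] at this
  rw [this, smul_eq_mul]
  field_simp

/-- **Frullani's integral** for the exponential, with values in `ℝ≥0∞`. -/
lemma lintegral_frullani_exp {a b : ℝ} (ha : 0 < a) (hab : a ≤ b) :
    ∫⁻ t in Ioi 0, ENNReal.ofReal ((exp (-(a * t)) - exp (-(b * t))) / t)
      = ENNReal.ofReal (log b - log a) := by
  have hb : 0 < b := ha.trans_le hab
  have inner : ∀ t ∈ Ioi (0 : ℝ), ENNReal.ofReal ((exp (-(a * t)) - exp (-(b * t))) / t)
      = ∫⁻ s in Ioc a b, ENNReal.ofReal (exp (-(s * t))) := by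
    intro t ht
    rw [← integral_exp_neg_mul ht, intervalIntegral.integral_of_le hab,
      ofReal_integral_eq_lintegral_ofReal]
    · exact (Continuous.integrableOn_Ioc (by fun_prop))
    · exact ae_of_all _ fun s ↦ (exp_pos _).le
  calc ∫⁻ t in Ioi 0, ENNReal.ofReal ((exp (-(a * t)) - exp (-(b * t))) / t)
      = ∫⁻ t in Ioi 0, ∫⁻ s in Ioc a b, ENNReal.ofReal (exp (-(s * t))) :=
        setLIntegral_congr_fun measurableSet_Ioi inner
    _ = ∫⁻ s in Ioc a b, ∫⁻ t in Ioi 0, ENNReal.ofReal (exp (-(s * t))) :=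
        lintegral_lintegral_swap (by fun_prop)
    _ = ∫⁻ s in Ioc a b, ENNReal.ofReal s⁻¹ :=
        setLIntegral_congr_fun measurableSet_Ioc fun s hs ↦
          lintegral_exp_neg_mul_Ioi (ha.trans_le hs.1.le)
    _ = ENNReal.ofReal (log b - log a) := by
        rw [← ofReal_integral_eq_lintegral_ofReal, ← intervalIntegral.integral_of_le hab,
          integral_inv_of_pos ha hb, log_div hb.ne' ha.ne']
        · exact (ContinuousOn.integrableOn_Icc (continuousOn_inv₀.mono fun x hx ↦
            (ha.trans_le hx.1).ne')).mono_set Ioc_subset_Icc_self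
        · exact (ae_restrict_iff' measurableSet_Ioc).2
            (ae_of_all _ fun s hs ↦ (inv_pos.2 (ha.trans hs.1)).le)

lemma lintegral_one_sub_exp_neg_mul_div_eq_top {b : ℝ} (hb : 0 < b) :
    ∫⁻ t in Ioi 0, ENNReal.ofReal ((1 - exp (-(b * t))) / t) = ⊤ := by
  refine ENNReal.eq_top_of_forall_nnreal_le fun r ↦ ?_
  have ha : 0 < b * exp (-r) := by positivity
  have hab : b * exp (-r) ≤ b := mul_le_of_le_one_right hb.le (exp_le_one_iff.2 (by simp))
  calc (r : ℝ≥0∞) = ENNReal.ofReal (log b - log (b * exp (-r))) := by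
        rw [log_mul hb.ne' (exp_ne_zero _), log_exp]; simp
    _ = ∫⁻ t in Ioi 0, ENNReal.ofReal ((exp (-(b * exp (-r) * t)) - exp (-(b * t))) / t) :=
        (lintegral_frullani_exp ha hab).symm
    _ ≤ ∫⁻ t in Ioi 0, ENNReal.ofReal ((1 - exp (-(b * t))) / t) := by
        refine setLIntegral_mono (by fun_prop) fun t ht ↦ ENNReal.ofReal_le_ofReal ?_
        have ht : 0 < t := ht
        gcongr
        exact exp_le_one_iff.2 (neg_nonpos.2 (by positivity))

end Frullani

section LogKernel

lemma measurable_logKerPos : Measurable fun p : ℝ × ℝ ↦ logKerPos p.1 p.2 :=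
  Measurable.ite (measurableSet_eq_fun measurable_fst measurable_snd) measurable_const
    (by fun_prop)

lemma measurable_logKerNeg : Measurable fun p : ℝ × ℝ ↦ logKerNeg p.1 p.2 :=
  Measurable.ite (measurableSet_eq_fun measurable_fst measurable_snd) measurable_const
    (by fun_prop)

noncomputable def logKerIntegrand (M t : ℝ) (p : ℝ × ℝ) : ℝ≥0∞ :=
  ENNReal.ofReal ((exp (-((p.1 - p.2) ^ 2 * t)) - exp (-(M ^ 2 * t))) / (2 * t))

lemma measurable_logKerIntegrand (M : ℝ) :
    Measurable fun q : ℝ × ℝ × ℝ ↦ logKerIntegrand M q.1 q.2 :=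
  ENNReal.measurable_ofReal.comp (by fun_prop)

lemma logKerIntegrand_eq_mul_half (M t : ℝ) (p : ℝ × ℝ) :
    logKerIntegrand M t p = ENNReal.ofReal
      ((exp (-((p.1 - p.2) ^ 2 * t)) - exp (-(M ^ 2 * t))) / t) * ENNReal.ofReal 2⁻¹ := by
  rw [logKerIntegrand, ← ENNReal.ofReal_mul' (by norm_num), div_mul_eq_div_div_swap]
  ring_nf

lemma lintegral_logKerIntegrand_of_ne {M x y : ℝ} (hxy : x ≠ y) (hM : |x - y| ≤ M) :
    ∫⁻ t in Ioi 0, logKerIntegrand M t (x, y) = ENNReal.ofReal (log M - log |x - y|) := by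
  have hsq : (x - y) ^ 2 ≤ M ^ 2 := sq_le_sq' (abs_le.1 hM).1 (abs_le.1 hM).2
  simp_rw [logKerIntegrand_eq_mul_half]
  rw [lintegral_mul_const' _ _ ENNReal.ofReal_ne_top,
    lintegral_frullani_exp (by positivity [sub_ne_zero.2 hxy]) hsq,
    ← ENNReal.ofReal_mul' (by norm_num), ← sq_abs (x - y), log_pow, log_pow]
  ring_nf

lemma lintegral_logKerIntegrand_self {M : ℝ} (hM : M ≠ 0) (x : ℝ) :
    ∫⁻ t in Ioi 0, logKerIntegrand M t (x, x) = ⊤ := by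
  simp_rw [logKerIntegrand_eq_mul_half, sub_self, zero_pow two_ne_zero, zero_mul, neg_zero,
    exp_zero]
  rw [lintegral_mul_const' _ _ ENNReal.ofReal_ne_top,
    lintegral_one_sub_exp_neg_mul_div_eq_top (by positivity), ENNReal.top_mul]
  norm_num

lemma lintegral_logKerIntegrand_add_logKerNeg {M x y : ℝ} (hM : 1 ≤ M) (hxy : |x - y| ≤ M) :
    (∫⁻ t in Ioi 0, logKerIntegrand M t (x, y)) + logKerNeg x y
      = logKerPos x y + ENNReal.ofReal (log M) := by
  rcases eq_or_ne x y with rfl | hne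
  · simp [lintegral_logKerIntegrand_self (by positivity : M ≠ 0), logKerPos]
  have hlog : log |x - y| ≤ log M := log_le_log (abs_pos.2 (sub_ne_zero.2 hne)) hxy
  have hM0 : 0 ≤ log M := log_nonneg hM
  rw [lintegral_logKerIntegrand_of_ne hne hxy, logKerNeg, logKerPos, if_neg hne, if_neg hne]
  rcases le_total 0 (log |x - y|) with h | h
  · rw [ENNReal.ofReal_of_nonpos (neg_nonpos.2 h), zero_add,
      ← ENNReal.ofReal_add (by linarith) h, sub_add_cancel]
  · rw [ENNReal.ofReal_of_nonpos h, add_zero, ← ENNReal.ofReal_add (by linarith) hM0]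
    ring_nf

end LogKernel

section GaussianKernel

lemma exp_neg_sq_mul_mul_exp_neg_sq_mul (t x y s : ℝ) :
    exp (-(2 * t * (x - s) ^ 2)) * exp (-(2 * t * (y - s) ^ 2))
      = exp (-(4 * t * (s - (x + y) / 2) ^ 2)) * exp (-((x - y) ^ 2 * t)) := by
  rw [← exp_add, ← exp_add]; ring_nf

lemma integral_exp_neg_sq_mul_mul_exp_neg_sq_mul (t x y : ℝ) :
    ∫ s, exp (-(2 * t * (x - s) ^ 2)) * exp (-(2 * t * (y - s) ^ 2))
      = sqrt (π / (4 * t)) * exp (-((x - y) ^ 2 * t)) := by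
  have hgauss := integral_gaussian (4 * t)
  simp only [neg_mul] at hgauss
  simp_rw [exp_neg_sq_mul_mul_exp_neg_sq_mul]
  rw [integral_mul_const,
    integral_sub_right_eq_self (fun s ↦ exp (-(4 * t * s ^ 2))) ((x + y) / 2), hgauss]

lemma integrable_exp_neg_sq_mul_mul_exp_neg_sq_mul {t : ℝ} (ht : 0 < t) (x y : ℝ) :
    Integrable fun s ↦ exp (-(2 * t * (x - s) ^ 2)) * exp (-(2 * t * (y - s) ^ 2)) := by
  simp_rw [exp_neg_sq_mul_mul_exp_neg_sq_mul]
  refine Integrable.mul_const ?_ _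
  simpa [neg_mul] using
    (integrable_exp_neg_mul_sq (by positivity : 0 < 4 * t)).comp_sub_right ((x + y) / 2)

/-- The semigroup property of the heat kernel, `p_{2τ} = p_τ ∗ p_τ`. -/
lemma ofReal_exp_neg_sq_mul_eq_lintegral {t : ℝ} (ht : 0 < t) (x y : ℝ) :
    ENNReal.ofReal (exp (-((x - y) ^ 2 * t))) = ENNReal.ofReal (sqrt (π / (4 * t)))⁻¹ *
      ∫⁻ s, ENNReal.ofReal (exp (-(2 * t * (x - s) ^ 2)))
        * ENNReal.ofReal (exp (-(2 * t * (y - s) ^ 2))) := by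
  have hc : 0 < sqrt (π / (4 * t)) := sqrt_pos.2 (by positivity)
  simp_rw [← ENNReal.ofReal_mul (exp_pos _).le]
  rw [← ofReal_integral_eq_lintegral_ofReal
      (integrable_exp_neg_sq_mul_mul_exp_neg_sq_mul ht x y) (ae_of_all _ fun s ↦ by positivity),
    integral_exp_neg_sq_mul_mul_exp_neg_sq_mul, ← ENNReal.ofReal_mul (by positivity),
    inv_mul_cancel_left₀ hc.ne']

noncomputable def gaussPotential (t : ℝ) (μ : Measure ℝ) (s : ℝ) : ℝ≥0∞ :=
  ∫⁻ x, ENNReal.ofReal (exp (-(2 * t * (x - s) ^ 2))) ∂μ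

lemma measurable_gaussPotential (t : ℝ) (μ : Measure ℝ) [SFinite μ] :
    Measurable (gaussPotential t μ) :=
  Measurable.lintegral_prod_left'
    (f := fun q : ℝ × ℝ ↦ ENNReal.ofReal (exp (-(2 * t * (q.1 - q.2) ^ 2)))) (by fun_prop)

lemma lintegral_exp_neg_sq_mul_prod {t : ℝ} (ht : 0 < t) (μ ν : Measure ℝ)
    [SFinite μ] [SFinite ν] :
    ∫⁻ p, ENNReal.ofReal (exp (-((p.1 - p.2) ^ 2 * t))) ∂(μ.prod ν)
      = ENNReal.ofReal (sqrt (π / (4 * t)))⁻¹ *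
          ∫⁻ s, gaussPotential t μ s * gaussPotential t ν s := by
  have hmeas : Measurable fun q : (ℝ × ℝ) × ℝ ↦
      ENNReal.ofReal (exp (-(2 * t * (q.1.1 - q.2) ^ 2)))
        * ENNReal.ofReal (exp (-(2 * t * (q.1.2 - q.2) ^ 2))) := by
    fun_prop
  simp_rw [ofReal_exp_neg_sq_mul_eq_lintegral ht]
  rw [lintegral_const_mul _ hmeas.lintegral_prod_right',
    lintegral_lintegral_swap hmeas.aemeasurable]
  congr 1
  refine lintegral_congr fun s ↦ ?_
  exact lintegral_prod_mul (f := fun x ↦ ENNReal.ofReal (exp (-(2 * t * (x - s) ^ 2))))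
    (g := fun y ↦ ENNReal.ofReal (exp (-(2 * t * (y - s) ^ 2)))) (by fun_prop) (by fun_prop)

lemma ENNReal.two_mul_le_add_sq (a b : ℝ≥0∞) : 2 * a * b ≤ a ^ 2 + b ^ 2 := by
  rcases eq_or_ne a ⊤ with rfl | ha
  · simp
  rcases eq_or_ne b ⊤ with rfl | hb
  · simp
  lift a to NNReal using ha
  lift b to NNReal using hb
  exact_mod_cast _root_.two_mul_le_add_sq a b

/-- The Gaussian kernel is positive definite. -/
lemma two_mul_lintegral_exp_neg_sq_mul_prod_le {t : ℝ} (ht : 0 < t) (μ ν : Measure ℝ)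
    [SFinite μ] [SFinite ν] :
    2 * ∫⁻ p, ENNReal.ofReal (exp (-((p.1 - p.2) ^ 2 * t))) ∂(μ.prod ν)
      ≤ ∫⁻ p, ENNReal.ofReal (exp (-((p.1 - p.2) ^ 2 * t))) ∂(μ.prod μ)
        + ∫⁻ p, ENNReal.ofReal (exp (-((p.1 - p.2) ^ 2 * t))) ∂(ν.prod ν) := by
  have hμ := measurable_gaussPotential t μ
  have hν := measurable_gaussPotential t ν
  simp_rw [lintegral_exp_neg_sq_mul_prod ht, mul_left_comm (2 : ℝ≥0∞), ← mul_add]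
  gcongr
  rw [← lintegral_const_mul _ (hμ.fun_mul hν), ← lintegral_add_left (hμ.fun_mul hμ)]
  refine lintegral_mono fun s ↦ ?_
  simpa [← mul_assoc, sq] using
    ENNReal.two_mul_le_add_sq (gaussPotential t μ s) (gaussPotential t ν s)

end GaussianKernel

lemma EReal.coe_ennreal_sub_eq_of_add_eq {a b c d : ℝ≥0∞} (h : a + b = c + d) (hb : b ≠ ⊤)
    (hd : d ≠ ⊤) : (c : EReal) - b = a - d := by
  lift b to NNReal using hb
  lift d to NNReal using hd
  rcases eq_or_ne a ⊤ with rfl | ha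
  · obtain rfl : c = ⊤ := by simpa using h.symm
    simp only [EReal.coe_ennreal_top, EReal.coe_nnreal_eq_coe_real, EReal.top_sub_coe]
  lift a to NNReal using ha
  lift c to NNReal using (by rintro rfl; simp at h)
  have h' : (a : ℝ) + b = c + d := by exact_mod_cast h
  simp only [EReal.coe_nnreal_eq_coe_real, ← EReal.coe_sub, EReal.coe_eq_coe_iff]
  linarith

lemma EReal.two_mul_coe_ennreal_sub_le {a b c d : ℝ≥0∞} (hd : d ≠ ⊤) (h : 2 * a ≤ b + c) :
    2 * ((a : EReal) - d) ≤ ((b : EReal) - d) + ((c : EReal) - d) := by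
  lift d to NNReal using hd
  rw [EReal.coe_nnreal_eq_coe_real]
  have sub_ne_bot : ∀ x : ℝ≥0∞, (x : EReal) - (d : ℝ) ≠ ⊥ := fun x ↦ by
    simp [sub_eq_add_neg, ← EReal.coe_neg]
  rcases eq_or_ne b ⊤ with rfl | hb
  · rw [EReal.coe_ennreal_top, EReal.top_sub_coe, EReal.top_add_of_ne_bot (sub_ne_bot c)]
    exact le_top
  rcases eq_or_ne c ⊤ with rfl | hc
  · rw [EReal.coe_ennreal_top, EReal.top_sub_coe, EReal.add_top_of_ne_bot (sub_ne_bot b)]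
    exact le_top
  have ha : a ≠ ⊤ := ne_top_of_le_ne_top (by simp [hb, hc])
    ((le_mul_of_one_le_left zero_le one_le_two).trans h)
  lift a to NNReal using ha
  lift b to NNReal using hb
  lift c to NNReal using hc
  have h' : 2 * (a : ℝ) ≤ b + c := by exact_mod_cast h
  simp only [EReal.coe_nnreal_eq_coe_real, ← EReal.coe_sub, ← EReal.coe_add]
  rw [show (2 : EReal) = ((2 : ℝ) : EReal) from rfl, ← EReal.coe_mul, EReal.coe_le_coe_iff]
  linarith

lemma measure_prod_univ {α β : Type*} [MeasurableSpace α] [MeasurableSpace β] (μ : Measure α)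
    (ν : Measure β) [SFinite ν] : μ.prod ν univ = μ univ * ν univ := by
  rw [← univ_prod_univ, Measure.prod_prod]

section Energy

open Bornology Metric

variable {μ ν : Measure ℝ} {M : ℝ}

lemma ae_abs_sub_le_of_measure_compl_eq_zero {S : Set ℝ} (hS : IsBounded S) (hSM : diam S ≤ M)
    (hμ : μ Sᶜ = 0) (hν : ν Sᶜ = 0) : ∀ᵐ p ∂(μ.prod ν), |p.1 - p.2| ≤ M := by
  have h₁ : ∀ᵐ p ∂(μ.prod ν), p.1 ∈ S := Measure.quasiMeasurePreserving_fst.ae hμ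
  have h₂ : ∀ᵐ p ∂(μ.prod ν), p.2 ∈ S := Measure.quasiMeasurePreserving_snd.ae hν
  filter_upwards [h₁, h₂] with p hp₁ hp₂
  exact (dist_le_diam_of_mem hS hp₁ hp₂).trans hSM

lemma lintegral_logKerIntegrand_prod_add {t : ℝ} (ht : 0 < t) [SFinite ν]
    (hM : ∀ᵐ p ∂(μ.prod ν), |p.1 - p.2| ≤ M) :
    (∫⁻ p, logKerIntegrand M t p ∂(μ.prod ν))
        + ENNReal.ofReal (exp (-(M ^ 2 * t)) / (2 * t)) * (μ univ * ν univ)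
      = ENNReal.ofReal (2 * t)⁻¹
          * ∫⁻ p, ENNReal.ofReal (exp (-((p.1 - p.2) ^ 2 * t))) ∂(μ.prod ν) := by
  rw [← measure_prod_univ, ← lintegral_const, ← lintegral_add_right _ measurable_const,
    ← lintegral_const_mul _ (by fun_prop)]
  refine lintegral_congr_ae (hM.mono fun p hp ↦ ?_)
  have hexp : exp (-(M ^ 2 * t)) ≤ exp (-((p.1 - p.2) ^ 2 * t)) := by
    have hsq := sq_le_sq' (abs_le.1 hp).1 (abs_le.1 hp).2
    exact exp_le_exp.2 (neg_le_neg (mul_le_mul_of_nonneg_right hsq ht.le))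
  simp only [logKerIntegrand]
  rw [← ENNReal.ofReal_add (div_nonneg (sub_nonneg.2 hexp) (by positivity))
    (by positivity), ← ENNReal.ofReal_mul (by positivity)]
  congr 1
  field_simp
  ring

lemma two_mul_lintegral_logKerIntegrand_prod_le {t : ℝ} (ht : 0 < t)
    [IsFiniteMeasure μ] [IsFiniteMeasure ν] {S : Set ℝ} (hS : IsBounded S) (hSM : diam S ≤ M)
    (hμ : μ Sᶜ = 0) (hν : ν Sᶜ = 0) (hmass : μ univ = ν univ) :
    2 * ∫⁻ p, logKerIntegrand M t p ∂(μ.prod ν)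
      ≤ (∫⁻ p, logKerIntegrand M t p ∂(μ.prod μ)) + ∫⁻ p, logKerIntegrand M t p ∂(ν.prod ν) := by
  have hμν := lintegral_logKerIntegrand_prod_add ht
    (ae_abs_sub_le_of_measure_compl_eq_zero hS hSM hμ hν)
  have hμμ := lintegral_logKerIntegrand_prod_add ht
    (ae_abs_sub_le_of_measure_compl_eq_zero hS hSM hμ hμ)
  have hνν := lintegral_logKerIntegrand_prod_add ht
    (ae_abs_sub_le_of_measure_compl_eq_zero hS hSM hν hν)
  rw [hmass] at hμν hμμ
  set c := ENNReal.ofReal (exp (-(M ^ 2 * t)) / (2 * t)) * (ν univ * ν univ)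
  have hc : c ≠ ⊤ := by finiteness
  rw [← ENNReal.add_le_add_iff_right (ENNReal.add_ne_top.2 ⟨hc, hc⟩)]
  calc 2 * (∫⁻ p, logKerIntegrand M t p ∂(μ.prod ν)) + (c + c)
      = ENNReal.ofReal (2 * t)⁻¹
          * (2 * ∫⁻ p, ENNReal.ofReal (exp (-((p.1 - p.2) ^ 2 * t))) ∂(μ.prod ν)) := by
        rw [mul_left_comm, ← hμν]; ring
    _ ≤ ENNReal.ofReal (2 * t)⁻¹
          * ((∫⁻ p, ENNReal.ofReal (exp (-((p.1 - p.2) ^ 2 * t))) ∂(μ.prod μ))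
            + ∫⁻ p, ENNReal.ofReal (exp (-((p.1 - p.2) ^ 2 * t))) ∂(ν.prod ν)) := by
        gcongr
        exact two_mul_lintegral_exp_neg_sq_mul_prod_le ht μ ν
    _ = (∫⁻ p, logKerIntegrand M t p ∂(μ.prod μ)) + (∫⁻ p, logKerIntegrand M t p ∂(ν.prod ν))
          + (c + c) := by
        rw [mul_add, ← hμμ, ← hνν]; ring

lemma lintegral_logKerIntegrand_add_lintegral_logKerNeg [SFinite μ] [SFinite ν] (hM1 : 1 ≤ M)
    (hM : ∀ᵐ p ∂(μ.prod ν), |p.1 - p.2| ≤ M) :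
    (∫⁻ t in Ioi 0, ∫⁻ p, logKerIntegrand M t p ∂(μ.prod ν))
        + ∫⁻ p, logKerNeg p.1 p.2 ∂(μ.prod ν)
      = (∫⁻ p, logKerPos p.1 p.2 ∂(μ.prod ν)) + ENNReal.ofReal (log M) * (μ univ * ν univ) := by
  have hmeas := measurable_logKerIntegrand M
  rw [lintegral_lintegral_swap hmeas.aemeasurable, ← measure_prod_univ, ← lintegral_const,
    ← lintegral_add_left hmeas.lintegral_prod_left', ← lintegral_add_left measurable_logKerPos]
  exact lintegral_congr_ae (hM.mono fun p hp ↦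
    lintegral_logKerIntegrand_add_logKerNeg (x := p.1) (y := p.2) hM1 hp)

lemma lintegral_logKerNeg_ne_top [IsFiniteMeasure μ] [IsFiniteMeasure ν]
    (hM : ∀ᵐ p ∂(μ.prod ν), |p.1 - p.2| ≤ M) :
    ∫⁻ p, logKerNeg p.1 p.2 ∂(μ.prod ν) ≠ ⊤ := by
  refine ne_top_of_le_ne_top
    (lintegral_const_lt_top (c := ENNReal.ofReal (log M)) ENNReal.ofReal_ne_top).ne
    (lintegral_mono_ae (hM.mono fun p hp ↦ ?_))
  rw [logKerNeg]
  split_ifs with h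
  · exact zero_le
  · exact ENNReal.ofReal_le_ofReal (log_le_log (abs_pos.2 (sub_ne_zero.2 h)) hp)

lemma dblInt_logKer_eq_sub [IsFiniteMeasure μ] [IsFiniteMeasure ν] (hM1 : 1 ≤ M)
    (hM : ∀ᵐ p ∂(μ.prod ν), |p.1 - p.2| ≤ M) :
    dblInt logKerPos logKerNeg μ ν
      = ((∫⁻ t in Ioi 0, ∫⁻ p, logKerIntegrand M t p ∂(μ.prod ν) : ℝ≥0∞) : EReal)
        - (ENNReal.ofReal (log M) * (μ univ * ν univ) : ℝ≥0∞) :=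
  EReal.coe_ennreal_sub_eq_of_add_eq (lintegral_logKerIntegrand_add_lintegral_logKerNeg hM1 hM)
    (lintegral_logKerNeg_ne_top hM) (by finiteness)

theorem two_mul_dblInt_logKer_le [IsFiniteMeasure μ] [IsFiniteMeasure ν] {S : Set ℝ}
    (hS : IsBounded S) (hμ : μ Sᶜ = 0) (hν : ν Sᶜ = 0) (hmass : μ univ = ν univ) :
    2 * dblInt logKerPos logKerNeg μ ν
      ≤ dblInt logKerPos logKerNeg μ μ + dblInt logKerPos logKerNeg ν ν := by
  set M := max (diam S) 1
  have hSM : diam S ≤ M := le_max_left _ _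
  have hM1 : 1 ≤ M := le_max_right _ _
  have hmeas (θ : Measure (ℝ × ℝ)) [SFinite θ] :
      Measurable fun t ↦ ∫⁻ p, logKerIntegrand M t p ∂θ :=
    (measurable_logKerIntegrand M).lintegral_prod_right'
  rw [dblInt_logKer_eq_sub hM1 (ae_abs_sub_le_of_measure_compl_eq_zero hS hSM hμ hν),
    dblInt_logKer_eq_sub hM1 (ae_abs_sub_le_of_measure_compl_eq_zero hS hSM hμ hμ),
    dblInt_logKer_eq_sub hM1 (ae_abs_sub_le_of_measure_compl_eq_zero hS hSM hν hν), hmass]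
  refine EReal.two_mul_coe_ennreal_sub_le (by finiteness) ?_
  rw [← lintegral_const_mul _ (hmeas _), ← lintegral_add_left (hmeas _)]
  exact setLIntegral_mono' measurableSet_Ioi fun t ht ↦
    two_mul_lintegral_logKerIntegrand_prod_le ht hS hSM hμ hν hmass

end Energy

lemma dblInt_expKer_eq_dblInt_logKer_map (μ ν : Measure ℝ) [SFinite μ] [SFinite ν] :
    dblInt expKerPos expKerNeg μ ν = dblInt logKerPos logKerNeg (μ.map exp) (ν.map exp) := by
  have hexp := measurable_exp.prodMap measurable_exp
  rw [dblInt, dblInt, Measure.map_prod_map _ _ measurable_exp measurable_exp,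
    lintegral_map measurable_logKerPos hexp, lintegral_map measurable_logKerNeg hexp]
  simp [logKerPos, logKerNeg, expKerPos, expKerNeg]

lemma MeasureTheory.Measure.map_apply_compl_image_eq_zero {μ : Measure ℝ} {f : ℝ → ℝ}
    (hf : Continuous f) {K : Set ℝ} (hK : IsCompact K) (hμ : μ Kᶜ = 0) :
    μ.map f (f '' K)ᶜ = 0 := by
  rw [Measure.map_apply hf.measurable (hK.image hf).isClosed.measurableSet.compl]
  exact measure_mono_null (fun x hx hxK ↦ hx (mem_image_of_mem f hxK)) hμ

theorem signed_log_energies_nonneg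
    (μp μm : Measure ℝ) (hμp : IsFiniteMeasure μp) (hμm : IsFiniteMeasure μm)
    (hKp : ∃ K : Set ℝ, IsCompact K ∧ μp Kᶜ = 0)
    (hKm : ∃ K : Set ℝ, IsCompact K ∧ μm Kᶜ = 0)
    (hmass : μp Set.univ = μm Set.univ) :
    2 * dblInt logKerPos logKerNeg μp μm
      ≤ dblInt logKerPos logKerNeg μp μp + dblInt logKerPos logKerNeg μm μm ∧
    2 * dblInt expKerPos expKerNeg μp μm
      ≤ dblInt expKerPos expKerNeg μp μp + dblInt expKerPos expKerNeg μm μm := by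
  obtain ⟨Kp, hKp, hμpKp⟩ := hKp
  obtain ⟨Km, hKm, hμmKm⟩ := hKm
  have hK := hKp.union hKm
  have hμpK : μp (Kp ∪ Km)ᶜ = 0 := measure_mono_null (compl_subset_compl.2 subset_union_left) hμpKp
  have hμmK : μm (Kp ∪ Km)ᶜ = 0 := measure_mono_null (compl_subset_compl.2 subset_union_right) hμmKm
  refine ⟨two_mul_dblInt_logKer_le hK.isBounded hμpK hμmK hmass, ?_⟩
  simp only [dblInt_expKer_eq_dblInt_logKer_map]
  refine two_mul_dblInt_logKer_le (hK.image continuous_exp).isBounded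
    (Measure.map_apply_compl_image_eq_zero continuous_exp hK hμpK)
    (Measure.map_apply_compl_image_eq_zero continuous_exp hK hμmK) ?_
  rw [Measure.map_apply measurable_exp .univ, Measure.map_apply measurable_exp .univ,
    preimage_univ, hmass]
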